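/- arXiv:1207.1235 — 2 statements merged into one kernel-verified Lean document; each statement's English description precedes it below -/
import Mathlib

section
/- Let 0<α<1, u₀ ∈ ℝ, b>0, T>0, and let f be continuous on R₀ = {(t,u) : 0≤t≤T, |u−u₀|≤b} with |f(t,u)| ≤ M on R₀ and |f(t,u)−f(t,v)| ≤ L|u−v| for some L>0 and all (t,u),(t,v)∈R₀. Then there exists a unique continuous function u on [0,h], where h = min{T, (bΓ(α+1)/M)^{1/α}}, satisfying the Volterra integral equation u(t) = u₀ + (1/Γ(α)) ∫₀ᵗ (t−s)^{α−1} f(s,u(s)) ds for all t∈[0,h] (equivalently, the Caputo problem ᶜD₀₊^α u = f(t,u), u(0)=u₀). -/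
/-!
A solution is a fixed point of the Picard operator `u ↦ u₀ + J^α [f(·, u)]`, where `J^α` is the
Riemann–Liouville integral. Clamping `u` into the ball `|u - u₀| ≤ b` makes this operator act on
all of `C([0, h])` without changing its fixed points, and `J^α` maps bounded continuous functions
to `α`-Hölder ones, so it preserves continuity. Since `|J^α g| ≤ M t^α / Γ(α + 1)` for `|g| ≤ M`,
the choice of `h` puts every fixed point into the ball, where the clamp is inert. Finally
`J^α e^{κ·} ≤ κ^{-α} e^{κ·}`, so in the Bielecki norm `sup e^{-κ s} |u s|` the operator is
Lipschitz with constant `L κ^{-α}`, which is `1/2` for `κ^α = 2L`; the Banach fixed-point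
theorem gives existence and uniqueness.
-/

open Set intervalIntegral MeasureTheory Filter Topology Real
open scoped NNReal

theorem ContinuousMap.existsUnique_fixedPoint_of_weighted_contraction {X : Type*}
    [TopologicalSpace X] [CompactSpace X] {K : ℝ≥0} (hK : K < 1) (w : C(X, ℝ))
    (hw : ∀ x, 0 < w x) (Φ : C(X, ℝ) → C(X, ℝ))
    (hΦ : ∀ g₁ g₂ D, 0 ≤ D → (∀ x, |g₁ x - g₂ x| ≤ D * w x) →
      ∀ x, |Φ g₁ x - Φ g₂ x| ≤ K * D * w x) :
    ∃! g, Φ g = g := by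
  set w' : C(X, ℝ) := ⟨fun x => (w x)⁻¹, w.continuous.inv₀ fun x => (hw x).ne'⟩
  have hww' : w * w' = 1 := by ext x; simp [w', (hw x).ne']
  -- conjugating by `w` turns the weighted estimate into a contraction for the sup norm
  set Ψ : C(X, ℝ) → C(X, ℝ) := fun g => w' * Φ (w * g)
  have hΨ : ContractingWith K Ψ := by
    refine ⟨hK, LipschitzWith.of_dist_le_mul fun g₁ g₂ => ?_⟩
    refine (ContinuousMap.dist_le (by positivity)).2 fun x => ?_
    have hD : ∀ y, |(w * g₁) y - (w * g₂) y| ≤ dist g₁ g₂ * w y := fun y => by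
      rw [mul_apply, mul_apply, ← mul_sub, abs_mul, abs_of_pos (hw y), mul_comm]
      exact mul_le_mul_of_nonneg_right (Real.dist_eq _ _ ▸ dist_apply_le_dist y) (hw y).le
    calc dist (Ψ g₁ x) (Ψ g₂ x) = (w x)⁻¹ * |Φ (w * g₁) x - Φ (w * g₂) x| := by
          simp [Ψ, w', Real.dist_eq, ← mul_sub, abs_mul, abs_of_pos (hw x)]
      _ ≤ (w x)⁻¹ * (K * dist g₁ g₂ * w x) := by
          gcongr
          · exact (inv_pos.2 (hw x)).le
          · exact hΦ _ _ _ dist_nonneg hD x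
      _ = K * dist g₁ g₂ := by field_simp [(hw x).ne']
  have hfix : ∀ g, Ψ g = g ↔ Φ (w * g) = w * g := fun g => by
    constructor <;> intro hg
    · conv_rhs => rw [← hg]
      simp only [Ψ, ← mul_assoc, hww', one_mul]
    · simp only [Ψ, hg]
      rw [← mul_assoc, mul_comm w', hww', one_mul]
  refine ⟨w * hΨ.fixedPoint Ψ, (hfix _).1 hΨ.fixedPoint_isFixedPt, fun g hg => ?_⟩
  rw [← hΨ.fixedPoint_unique ((hfix (w' * g)).2 ?_)] <;>
    rw [← mul_assoc, hww', one_mul]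
  exact hg

theorem exists_fixedPoint_on_Icc_of_weighted_contraction {a b : ℝ} (hab : a ≤ b) {K : ℝ≥0}
    (hK : K < 1) {w : ℝ → ℝ} (hw_cont : ContinuousOn w (Icc a b)) (hw : ∀ x ∈ Icc a b, 0 < w x)
    (Φ : (ℝ → ℝ) → ℝ → ℝ)
    (hΦ_cont : ∀ u, ContinuousOn u (Icc a b) → ContinuousOn (Φ u) (Icc a b))
    (hΦ : ∀ u v D, ContinuousOn u (Icc a b) → ContinuousOn v (Icc a b) → 0 ≤ D →
      (∀ x ∈ Icc a b, |u x - v x| ≤ D * w x) → ∀ x ∈ Icc a b, |Φ u x - Φ v x| ≤ K * D * w x) :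
    ∃ u, ContinuousOn u (Icc a b) ∧ EqOn (Φ u) u (Icc a b) ∧
      ∀ v, ContinuousOn v (Icc a b) → EqOn (Φ v) v (Icc a b) → EqOn v u (Icc a b) := by
  have hΦ_congr : ∀ u v, ContinuousOn u (Icc a b) → ContinuousOn v (Icc a b) →
      EqOn u v (Icc a b) → EqOn (Φ u) (Φ v) (Icc a b) := fun u v hu hv huv x hx => by
    simpa [sub_eq_zero] using hΦ u v 0 hu hv le_rfl (fun y hy => by simp [huv hy]) x hx
  let extend (g : C(Icc a b, ℝ)) : ℝ → ℝ := IccExtend hab g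
  have hextend_cont (g : C(Icc a b, ℝ)) : ContinuousOn (extend g) (Icc a b) :=
    (continuous_IccExtend_iff.2 g.continuous).continuousOn
  let Ψ (g : C(Icc a b, ℝ)) : C(Icc a b, ℝ) :=
    ⟨(Icc a b).domRestrict (Φ (extend g)), (hΦ_cont _ (hextend_cont g)).domRestrict⟩
  obtain ⟨g, hg, hg_uniq⟩ := ContinuousMap.existsUnique_fixedPoint_of_weighted_contraction hK
    ⟨(Icc a b).domRestrict w, hw_cont.domRestrict⟩ (fun x => hw x x.2) Ψ
    fun g₁ g₂ D hD hg x => hΦ _ _ D (hextend_cont g₁) (hextend_cont g₂) hD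
      (fun y hy => by simpa [extend, Ψ, IccExtend_of_mem hab _ hy] using hg ⟨y, hy⟩) x x.2
  refine ⟨extend g, hextend_cont g, fun x hx => ?_, fun v hv hvfix x hx => ?_⟩
  · simpa [extend, Ψ, IccExtend_of_mem hab _ hx] using congr($hg ⟨x, hx⟩)
  · have hextend_v : EqOn (extend ⟨_, hv.domRestrict⟩) v (Icc a b) := fun y hy => by
      simp [extend, IccExtend_of_mem hab _ hy]
    have hΨv : Ψ ⟨_, hv.domRestrict⟩ = ⟨_, hv.domRestrict⟩ := by
      ext y
      exact (hΦ_congr _ _ (hextend_cont _) hv hextend_v y.2).trans (hvfix y.2)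
    simpa [extend, IccExtend_of_mem hab _ hx] using congr($(hg_uniq _ hΨv) ⟨x, hx⟩)

section Kernel

variable {α a b c : ℝ}

lemma intervalIntegrable_sub_rpow (hα : 0 < α) (c a b : ℝ) :
    IntervalIntegrable (fun s => (c - s) ^ (α - 1)) volume a b := by
  simpa using (intervalIntegral.intervalIntegrable_rpow' (by linarith : -1 < α - 1)
    (a := c - a) (b := c - b)).comp_sub_left c

lemma intervalIntegrable_sub_rpow_mul (hα : 0 < α) (hab : a ≤ b) {g : ℝ → ℝ}
    (hg : ContinuousOn g (Icc a b)) :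
    IntervalIntegrable (fun s => (c - s) ^ (α - 1) * g s) volume a b :=
  (intervalIntegrable_sub_rpow hα c a b).mul_continuousOn (by rwa [uIcc_of_le hab])

lemma integral_sub_rpow (hα : 0 < α) (c a b : ℝ) :
    ∫ s in a..b, (c - s) ^ (α - 1) = ((c - a) ^ α - (c - b) ^ α) / α := by
  rw [intervalIntegral.integral_comp_sub_left (fun x => x ^ (α - 1)) c,
    integral_rpow (Or.inl (by linarith : (-1:ℝ) < α - 1))]
  norm_num

lemma integral_sub_rpow_mul_const (hα : 0 < α) (a c M : ℝ) :
    ∫ s in a..c, (c - s) ^ (α - 1) * M = M * (c - a) ^ α / α := by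
  rw [intervalIntegral.integral_mul_const, integral_sub_rpow hα, sub_self, zero_rpow hα.ne',
    sub_zero]
  ring

lemma abs_integral_sub_rpow_mul_le (hα : 0 < α) (hab : a ≤ b) (hbc : b ≤ c) {g φ : ℝ → ℝ}
    (hφ : ContinuousOn φ (Icc a b)) (hgφ : ∀ s ∈ Icc a b, |g s| ≤ φ s) :
    |∫ s in a..b, (c - s) ^ (α - 1) * g s| ≤ ∫ s in a..b, (c - s) ^ (α - 1) * φ s := by
  rw [← Real.norm_eq_abs]
  refine intervalIntegral.norm_integral_le_of_norm_le hab (ae_of_all _ fun s hs => ?_)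
    (intervalIntegrable_sub_rpow_mul hα hab hφ)
  have hk : 0 ≤ (c - s) ^ (α - 1) := rpow_nonneg (by linarith [hs.2]) _
  rw [Real.norm_eq_abs, abs_mul, abs_of_nonneg hk]
  exact mul_le_mul_of_nonneg_left (hgφ s (Ioc_subset_Icc_self hs)) hk

lemma abs_integral_sub_rpow_sub_sub_rpow_mul_le (hα : 0 < α) (hα1 : α ≤ 1) {t₁ t₂ M : ℝ}
    (ht₁ : 0 ≤ t₁) (h12 : t₁ ≤ t₂) {g : ℝ → ℝ} (hgM : ∀ s ∈ Icc 0 t₁, |g s| ≤ M) :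
    |∫ s in (0:ℝ)..t₁, ((t₂ - s) ^ (α - 1) - (t₁ - s) ^ (α - 1)) * g s|
      ≤ M * (t₂ - t₁) ^ α / α := by
  have hM : 0 ≤ M := (abs_nonneg _).trans (hgM 0 ⟨le_rfl, ht₁⟩)
  have hint : IntervalIntegrable (fun s => ((t₁ - s) ^ (α - 1) - (t₂ - s) ^ (α - 1)) * M)
      volume 0 t₁ :=
    ((intervalIntegrable_sub_rpow hα _ _ _).sub (intervalIntegrable_sub_rpow hα _ _ _)).mul_const M
  rw [← Real.norm_eq_abs]
  refine (intervalIntegral.norm_integral_le_of_norm_le ht₁ ?_ hint).trans ?_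
  -- `s = t₁` is excluded: there `(t₁ - s) ^ (α - 1)` is the junk value `0`, not `+∞`
  · filter_upwards [volume.ae_ne t₁] with s hs hmem
    have hs1 : 0 < t₁ - s := sub_pos.2 (lt_of_le_of_ne hmem.2 hs)
    have hk : (t₂ - s) ^ (α - 1) ≤ (t₁ - s) ^ (α - 1) :=
      rpow_le_rpow_of_nonpos hs1 (by linarith) (by linarith)
    rw [Real.norm_eq_abs, abs_mul, abs_of_nonpos (by linarith), neg_sub]
    exact mul_le_mul_of_nonneg_left (hgM s (Ioc_subset_Icc_self hmem)) (by linarith)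
  · rw [intervalIntegral.integral_mul_const, intervalIntegral.integral_sub
      (intervalIntegrable_sub_rpow hα _ _ _) (intervalIntegrable_sub_rpow hα _ _ _),
      integral_sub_rpow hα, integral_sub_rpow hα, sub_self, zero_rpow hα.ne']
    simp only [sub_zero]
    rw [← sub_div, div_mul_eq_mul_div, mul_comm]
    gcongr
    linarith [rpow_le_rpow ht₁ h12 hα.le]

lemma abs_integral_sub_rpow_mul_sub_le (hα : 0 < α) (hα1 : α ≤ 1) {t₁ t₂ M : ℝ}
    (ht₁ : 0 ≤ t₁) (h12 : t₁ ≤ t₂) {g : ℝ → ℝ} (hg : ContinuousOn g (Icc 0 t₂))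
    (hgM : ∀ s ∈ Icc 0 t₂, |g s| ≤ M) :
    |(∫ s in (0:ℝ)..t₂, (t₂ - s) ^ (α - 1) * g s) - ∫ s in (0:ℝ)..t₁, (t₁ - s) ^ (α - 1) * g s|
      ≤ 2 * M * (t₂ - t₁) ^ α / α := by
  have hg₁ : ContinuousOn g (Icc 0 t₁) := hg.mono (Icc_subset_Icc le_rfl h12)
  have hsplit : (∫ s in (0:ℝ)..t₂, (t₂ - s) ^ (α - 1) * g s)
        - ∫ s in (0:ℝ)..t₁, (t₁ - s) ^ (α - 1) * g s
      = (∫ s in (0:ℝ)..t₁, ((t₂ - s) ^ (α - 1) - (t₁ - s) ^ (α - 1)) * g s)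
        + ∫ s in t₁..t₂, (t₂ - s) ^ (α - 1) * g s := by
    simp only [sub_mul]
    rw [← intervalIntegral.integral_add_adjacent_intervals
      (intervalIntegrable_sub_rpow_mul hα ht₁ hg₁)
      (intervalIntegrable_sub_rpow_mul hα h12 (hg.mono (Icc_subset_Icc ht₁ le_rfl))),
      intervalIntegral.integral_sub (intervalIntegrable_sub_rpow_mul (c := t₂) hα ht₁ hg₁)
      (intervalIntegrable_sub_rpow_mul (c := t₁) hα ht₁ hg₁)]
    ring
  have hB := abs_integral_sub_rpow_mul_le hα h12 le_rfl continuousOn_const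
    fun s hs => hgM s ⟨ht₁.trans hs.1, hs.2⟩
  rw [integral_sub_rpow_mul_const hα] at hB
  calc _ ≤ M * (t₂ - t₁) ^ α / α + M * (t₂ - t₁) ^ α / α := by
        rw [hsplit]
        exact (abs_add_le _ _).trans (add_le_add
          (abs_integral_sub_rpow_sub_sub_rpow_mul_le hα hα1 ht₁ h12
            fun s hs => hgM s ⟨hs.1, hs.2.trans h12⟩) hB)
    _ = 2 * M * (t₂ - t₁) ^ α / α := by ring

end Kernel

theorem continuousOn_of_dist_le_mul_rpow {X Y : Type*} [PseudoMetricSpace X]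
    [PseudoMetricSpace Y] {f : X → Y} {s : Set X} {C r : ℝ} (hr : 0 < r)
    (hf : ∀ x ∈ s, ∀ y ∈ s, dist (f x) (f y) ≤ C * dist x y ^ r) : ContinuousOn f s := by
  intro x hx
  rw [ContinuousWithinAt, tendsto_iff_dist_tendsto_zero]
  have hlim : Tendsto (fun y => C * dist y x ^ r) (𝓝[s] x) (𝓝 0) := by
    have : Continuous fun y => C * dist y x ^ r :=
      continuous_const.mul ((continuous_id.dist continuous_const).rpow_const fun _ => Or.inr hr.le)
    simpa [zero_rpow hr.ne'] using (this.tendsto x).mono_left nhdsWithin_le_nhds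
  exact squeeze_zero' (Eventually.of_forall fun _ => dist_nonneg)
    (eventually_nhdsWithin_of_forall fun y hy => hf y hy x hx) hlim

noncomputable def riemannLiouvilleIntegral (α : ℝ) (g : ℝ → ℝ) (t : ℝ) : ℝ :=
  1 / Gamma α * ∫ s in (0:ℝ)..t, (t - s) ^ (α - 1) * g s

section RiemannLiouville

variable {α t : ℝ} {g φ : ℝ → ℝ}

lemma riemannLiouvilleIntegral_congr (ht : 0 ≤ t) {g₁ g₂ : ℝ → ℝ}
    (hg : EqOn g₁ g₂ (Icc 0 t)) :
    riemannLiouvilleIntegral α g₁ t = riemannLiouvilleIntegral α g₂ t := by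
  simp only [riemannLiouvilleIntegral]
  congr 1
  refine intervalIntegral.integral_congr fun s hs => ?_
  rw [uIcc_of_le ht] at hs
  simp only [hg hs]

lemma riemannLiouvilleIntegral_const_mul (α c : ℝ) (g : ℝ → ℝ) (t : ℝ) :
    riemannLiouvilleIntegral α (fun s => c * g s) t = c * riemannLiouvilleIntegral α g t := by
  simp only [riemannLiouvilleIntegral, mul_left_comm _ c, intervalIntegral.integral_const_mul]


lemma riemannLiouvilleIntegral_const (hα : 0 < α) (c t : ℝ) :
    riemannLiouvilleIntegral α (fun _ => c) t = c * t ^ α / Gamma (α + 1) := by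
  rw [riemannLiouvilleIntegral, integral_sub_rpow_mul_const hα, sub_zero, Gamma_add_one hα.ne']
  field_simp

lemma abs_riemannLiouvilleIntegral_le (hα : 0 < α) (ht : 0 ≤ t) (hφ : ContinuousOn φ (Icc 0 t))
    (hgφ : ∀ s ∈ Icc 0 t, |g s| ≤ φ s) :
    |riemannLiouvilleIntegral α g t| ≤ riemannLiouvilleIntegral α φ t := by
  have hΓ : 0 < 1 / Gamma α := one_div_pos.2 (Gamma_pos_of_pos hα)
  rw [riemannLiouvilleIntegral, riemannLiouvilleIntegral, abs_mul, abs_of_pos hΓ]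
  exact mul_le_mul_of_nonneg_left (abs_integral_sub_rpow_mul_le hα ht le_rfl hφ hgφ) hΓ.le

lemma riemannLiouvilleIntegral_sub (hα : 0 < α) (ht : 0 ≤ t) {g₁ g₂ : ℝ → ℝ}
    (hg₁ : ContinuousOn g₁ (Icc 0 t)) (hg₂ : ContinuousOn g₂ (Icc 0 t)) :
    riemannLiouvilleIntegral α (fun s => g₁ s - g₂ s) t
      = riemannLiouvilleIntegral α g₁ t - riemannLiouvilleIntegral α g₂ t := by
  simp only [riemannLiouvilleIntegral, mul_sub]
  rw [intervalIntegral.integral_sub (intervalIntegrable_sub_rpow_mul hα ht hg₁)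
    (intervalIntegrable_sub_rpow_mul hα ht hg₂), mul_sub]

lemma riemannLiouvilleIntegral_exp_le (hα : 0 < α) {κ : ℝ} (hκ : 0 < κ) (ht : 0 ≤ t) :
    riemannLiouvilleIntegral α (fun s => exp (κ * s)) t ≤ (1 / κ) ^ α * exp (κ * t) := by
  have hshift : ∫ s in (0:ℝ)..t, (t - s) ^ (α - 1) * exp (κ * s)
      = exp (κ * t) * ∫ r in (0:ℝ)..t, r ^ (α - 1) * exp (-(κ * r)) := by
    have := intervalIntegral.integral_comp_sub_left
      (fun r => r ^ (α - 1) * exp (-(κ * r))) (a := 0) (b := t) t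
    rw [sub_self, sub_zero] at this
    rw [← this, ← intervalIntegral.integral_const_mul]
    congr 1 with s
    rw [mul_left_comm, ← exp_add]
    ring_nf
  have hgamma : ∫ r in (0:ℝ)..t, r ^ (α - 1) * exp (-(κ * r)) ≤ (1 / κ) ^ α * Gamma α := by
    rw [← integral_rpow_mul_exp_neg_mul_Ioi hα hκ, intervalIntegral.integral_of_le ht]
    refine setIntegral_mono_set ?_ ?_ Ioc_subset_Ioi_self.eventuallyLE
    · simpa using integrableOn_rpow_mul_exp_neg_mul_rpow (by linarith) one_pos hκ
    · filter_upwards [self_mem_ae_restrict measurableSet_Ioi] with r hr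
      exact mul_nonneg (rpow_nonneg (le_of_lt hr) _) (exp_pos _).le
  have hΓ := Gamma_pos_of_pos hα
  rw [riemannLiouvilleIntegral, hshift]
  calc 1 / Gamma α * (exp (κ * t) * ∫ r in (0:ℝ)..t, r ^ (α - 1) * exp (-(κ * r)))
      ≤ 1 / Gamma α * (exp (κ * t) * ((1 / κ) ^ α * Gamma α)) := by gcongr
    _ = (1 / κ) ^ α * exp (κ * t) := by field_simp

lemma abs_riemannLiouvilleIntegral_sub_le (hα : 0 < α) (hα1 : α ≤ 1) {t₁ t₂ M : ℝ}
    (ht₁ : 0 ≤ t₁) (h12 : t₁ ≤ t₂) (hg : ContinuousOn g (Icc 0 t₂))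
    (hgM : ∀ s ∈ Icc 0 t₂, |g s| ≤ M) :
    |riemannLiouvilleIntegral α g t₂ - riemannLiouvilleIntegral α g t₁|
      ≤ 2 * M * (t₂ - t₁) ^ α / Gamma (α + 1) := by
  have hΓ : 0 < 1 / Gamma α := one_div_pos.2 (Gamma_pos_of_pos hα)
  rw [riemannLiouvilleIntegral, riemannLiouvilleIntegral, ← mul_sub, abs_mul, abs_of_pos hΓ,
    Gamma_add_one hα.ne']
  calc _ ≤ 1 / Gamma α * (2 * M * (t₂ - t₁) ^ α / α) := by
        gcongr
        exact abs_integral_sub_rpow_mul_sub_le hα hα1 ht₁ h12 hg hgM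
    _ = _ := by field_simp

lemma continuousOn_riemannLiouvilleIntegral (hα : 0 < α) (hα1 : α ≤ 1) {h : ℝ}
    (hg : ContinuousOn g (Icc 0 h)) : ContinuousOn (riemannLiouvilleIntegral α g) (Icc 0 h) := by
  obtain ⟨M, hM⟩ := isCompact_Icc.exists_bound_of_continuousOn hg
  refine continuousOn_of_dist_le_mul_rpow hα (C := 2 * M / Gamma (α + 1))
    fun t₁ ht₁ t₂ ht₂ => ?_
  wlog h12 : t₁ ≤ t₂ generalizing t₁ t₂
  · rw [dist_comm, dist_comm t₁]
    exact this t₂ ht₂ t₁ ht₁ (le_of_not_ge h12)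
  rw [Real.dist_eq, Real.dist_eq, abs_sub_comm, abs_sub_comm t₁, abs_of_nonneg (sub_nonneg.2 h12)]
  refine (abs_riemannLiouvilleIntegral_sub_le hα hα1 ht₁.1 h12
    (hg.mono (Icc_subset_Icc le_rfl ht₂.2)) fun s hs => hM s ⟨hs.1, hs.2.trans ht₂.2⟩).trans_eq ?_
  ring

end RiemannLiouville

noncomputable def ballClamp (u₀ : ℝ) {b : ℝ} (hb : 0 ≤ b) (x : ℝ) : ℝ :=
  projIcc (u₀ - b) (u₀ + b) (by linarith) x

section Volterra

variable {u₀ b : ℝ} (hb : 0 ≤ b)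

lemma continuous_ballClamp : Continuous (ballClamp u₀ hb) :=
  continuous_subtype_val.comp continuous_projIcc

lemma abs_ballClamp_sub_le (x : ℝ) : |ballClamp u₀ hb x - u₀| ≤ b := by
  rw [abs_sub_comm, mem_Icc_iff_abs_le]
  exact (projIcc _ _ _ x).2

lemma ballClamp_of_abs_sub_le {x : ℝ} (hx : |x - u₀| ≤ b) : ballClamp u₀ hb x = x := by
  rw [abs_sub_comm, mem_Icc_iff_abs_le] at hx
  rw [ballClamp, projIcc_of_mem _ hx]

lemma abs_ballClamp_sub_ballClamp_le (x y : ℝ) :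
    |ballClamp u₀ hb x - ballClamp u₀ hb y| ≤ |x - y| :=
  abs_projIcc_sub_projIcc _

noncomputable def clampedVolterra (α u₀ : ℝ) {b : ℝ} (hb : 0 ≤ b) (f : ℝ → ℝ → ℝ) (u : ℝ → ℝ)
    (t : ℝ) : ℝ :=
  u₀ + riemannLiouvilleIntegral α (fun s => f s (ballClamp u₀ hb (u s))) t

variable {α T L M h t : ℝ} {f : ℝ → ℝ → ℝ} {u v : ℝ → ℝ}

lemma clampedVolterra_eq_of_abs_sub_le (ht : 0 ≤ t) (hu : ∀ s ∈ Icc 0 t, |u s - u₀| ≤ b) :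
    clampedVolterra α u₀ hb f u t = u₀ + riemannLiouvilleIntegral α (fun s => f s (u s)) t := by
  rw [clampedVolterra, riemannLiouvilleIntegral_congr (g₂ := fun s => f s (u s)) ht fun s hs => by
    simp only [ballClamp_of_abs_sub_le hb (hu s hs)]]

lemma continuousOn_comp_ballClamp (hhT : h ≤ T)
    (hf : ContinuousOn (fun p : ℝ × ℝ => f p.1 p.2) {p | p.1 ∈ Icc 0 T ∧ |p.2 - u₀| ≤ b})
    (hu : ContinuousOn u (Icc 0 h)) :
    ContinuousOn (fun s => f s (ballClamp u₀ hb (u s))) (Icc 0 h) :=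
  hf.comp (continuousOn_id.prodMk ((continuous_ballClamp hb).comp_continuousOn hu))
    fun _ hs => ⟨⟨hs.1, hs.2.trans hhT⟩, abs_ballClamp_sub_le hb _⟩

lemma continuousOn_clampedVolterra (hα : 0 < α) (hα1 : α ≤ 1) (hhT : h ≤ T)
    (hf : ContinuousOn (fun p : ℝ × ℝ => f p.1 p.2) {p | p.1 ∈ Icc 0 T ∧ |p.2 - u₀| ≤ b})
    (hu : ContinuousOn u (Icc 0 h)) :
    ContinuousOn (clampedVolterra α u₀ hb f u) (Icc 0 h) :=
  continuousOn_const.add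
    (continuousOn_riemannLiouvilleIntegral hα hα1 (continuousOn_comp_ballClamp hb hhT hf hu))

lemma abs_clampedVolterra_sub_le (hα : 0 < α)
    (hfM : ∀ t ∈ Icc (0:ℝ) T, ∀ x : ℝ, |x - u₀| ≤ b → |f t x| ≤ M) (ht : 0 ≤ t) (htT : t ≤ T) :
    |clampedVolterra α u₀ hb f u t - u₀| ≤ M * t ^ α / Gamma (α + 1) := by
  rw [clampedVolterra, add_sub_cancel_left, ← riemannLiouvilleIntegral_const hα]
  exact abs_riemannLiouvilleIntegral_le hα ht continuousOn_const
    fun s hs => hfM s ⟨hs.1, hs.2.trans htT⟩ _ (abs_ballClamp_sub_le hb _)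

lemma abs_clampedVolterra_sub_clampedVolterra_le (hα : 0 < α) (hL : 0 ≤ L) (hhT : h ≤ T)
    (hf : ContinuousOn (fun p : ℝ × ℝ => f p.1 p.2) {p | p.1 ∈ Icc 0 T ∧ |p.2 - u₀| ≤ b})
    (hfL : ∀ t ∈ Icc (0:ℝ) T, ∀ x y : ℝ, |x - u₀| ≤ b → |y - u₀| ≤ b →
      |f t x - f t y| ≤ L * |x - y|)
    {κ D : ℝ} (hκ : 0 < κ) (hD : 0 ≤ D) (hu : ContinuousOn u (Icc 0 h))
    (hv : ContinuousOn v (Icc 0 h)) (huv : ∀ s ∈ Icc 0 h, |u s - v s| ≤ D * exp (κ * s))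
    (ht : t ∈ Icc 0 h) :
    |clampedVolterra α u₀ hb f u t - clampedVolterra α u₀ hb f v t|
      ≤ L * (1 / κ) ^ α * D * exp (κ * t) := by
  have hIcc : Icc 0 t ⊆ Icc 0 h := Icc_subset_Icc le_rfl ht.2
  rw [clampedVolterra, clampedVolterra, add_sub_add_left_eq_sub,
    ← riemannLiouvilleIntegral_sub hα ht.1
      ((continuousOn_comp_ballClamp hb hhT hf hu).mono hIcc)
      ((continuousOn_comp_ballClamp hb hhT hf hv).mono hIcc)]
  calc _ ≤ riemannLiouvilleIntegral α (fun s => L * D * exp (κ * s)) t := by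
        refine abs_riemannLiouvilleIntegral_le hα ht.1 (by fun_prop) fun s hs => ?_
        calc _ ≤ L * |ballClamp u₀ hb (u s) - ballClamp u₀ hb (v s)| :=
              hfL s ⟨hs.1, (hIcc hs).2.trans hhT⟩ _ _ (abs_ballClamp_sub_le hb _)
                (abs_ballClamp_sub_le hb _)
          _ ≤ L * (D * exp (κ * s)) := by
              gcongr
              exact (abs_ballClamp_sub_ballClamp_le hb _ _).trans (huv s (hIcc hs))
          _ = L * D * exp (κ * s) := by ring
    _ ≤ L * D * ((1 / κ) ^ α * exp (κ * t)) := by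
        rw [riemannLiouvilleIntegral_const_mul]
        gcongr
        exact riemannLiouvilleIntegral_exp_le hα hκ ht.1
    _ = L * (1 / κ) ^ α * D * exp (κ * t) := by ring

end Volterra

/-- Local existence and uniqueness for the Caputo problem `ᶜD₀₊^α u = f(t,u)`, `u(0)=u₀`,
in its equivalent Volterra integral form. -/
theorem caputo_local_existence_uniqueness (α u₀ b T M L h : ℝ)
    (hα : 0 < α) (hα1 : α < 1) (hb : 0 < b) (hT : 0 < T) (hM : 0 < M) (hL : 0 < L)
    (hh : h = min T ((b * Real.Gamma (α + 1) / M) ^ (1 / α)))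
    (f : ℝ → ℝ → ℝ)
    (hf : ContinuousOn (fun p : ℝ × ℝ => f p.1 p.2)
      {p : ℝ × ℝ | p.1 ∈ Set.Icc 0 T ∧ |p.2 - u₀| ≤ b})
    (hfM : ∀ t ∈ Set.Icc (0:ℝ) T, ∀ x : ℝ, |x - u₀| ≤ b → |f t x| ≤ M)
    (hfL : ∀ t ∈ Set.Icc (0:ℝ) T, ∀ x y : ℝ, |x - u₀| ≤ b → |y - u₀| ≤ b →
      |f t x - f t y| ≤ L * |x - y|) :
    ∃ u : ℝ → ℝ,
      (ContinuousOn u (Set.Icc 0 h) ∧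
        ∀ t ∈ Set.Icc (0:ℝ) h, |u t - u₀| ≤ b ∧
          u t = u₀ + (1 / Real.Gamma α) * ∫ s in (0:ℝ)..t, (t - s) ^ (α - 1) * f s (u s)) ∧
      ∀ v : ℝ → ℝ, ContinuousOn v (Set.Icc 0 h) →
        (∀ t ∈ Set.Icc (0:ℝ) h, |v t - u₀| ≤ b ∧
          v t = u₀ + (1 / Real.Gamma α) * ∫ s in (0:ℝ)..t, (t - s) ^ (α - 1) * f s (v s)) →
        ∀ t ∈ Set.Icc (0:ℝ) h, v t = u t := by
  have hh0 : 0 ≤ h := hh ▸ le_min hT.le (by positivity)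
  have hhT : h ≤ T := hh ▸ min_le_left _ _
  have hball : ∀ u, ∀ t ∈ Icc 0 h, |clampedVolterra α u₀ hb.le f u t - u₀| ≤ b := by
    intro u t ht
    refine (abs_clampedVolterra_sub_le hb.le hα hfM ht.1 (ht.2.trans hhT)).trans ?_
    rw [div_le_iff₀ (Gamma_pos_of_pos (by linarith)), ← le_div_iff₀' hM,
      ← le_rpow_inv_iff_of_pos ht.1 (by positivity) hα, ← one_div]
    exact ht.2.trans (hh ▸ min_le_right _ _)
  obtain ⟨κ, hκ, hLκ⟩ : ∃ κ > 0, L * (1 / κ) ^ α = 2⁻¹ :=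
    ⟨(2 * L) ^ α⁻¹, by positivity, by
      rw [one_div, inv_rpow (by positivity), ← rpow_mul (by positivity), inv_mul_cancel₀ hα.ne',
        rpow_one]
      field_simp⟩
  obtain ⟨u, hu, hu_fix, hu_uniq⟩ := exists_fixedPoint_on_Icc_of_weighted_contraction hh0 (K := 2⁻¹)
    (by norm_num) (w := fun s => exp (κ * s)) (by fun_prop) (fun _ _ => exp_pos _)
    (clampedVolterra α u₀ hb.le f) (fun _ => continuousOn_clampedVolterra hb.le hα hα1.le hhT hf)
    fun u v D hu hv hD huv t ht => by
      simpa only [NNReal.coe_inv, NNReal.coe_ofNat, hLκ] using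
        abs_clampedVolterra_sub_clampedVolterra_le hb.le hα hL.le hhT hf hfL hκ hD hu hv huv ht
  have hu_ball : ∀ t ∈ Icc 0 h, |u t - u₀| ≤ b := fun t ht => hu_fix ht ▸ hball u t ht
  refine ⟨u, ⟨hu, fun t ht => ⟨hu_ball t ht, ?_⟩⟩, fun v hv hv_sol => hu_uniq v hv fun t ht => ?_⟩
  · show u t = u₀ + riemannLiouvilleIntegral α (fun s => f s (u s)) t
    rw [← clampedVolterra_eq_of_abs_sub_le hb.le ht.1
      fun s hs => hu_ball s ⟨hs.1, hs.2.trans ht.2⟩, hu_fix ht]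
  · rw [clampedVolterra_eq_of_abs_sub_le hb.le ht.1
      fun s hs => (hv_sol s ⟨hs.1, hs.2.trans ht.2⟩).1]
    exact (hv_sol t ht).2.symm
end

section
/- Let 0<α<1 and u₀∈ℝ. If u(t) = E_α(−t^α)u₀ + ∫₀ᵗ (t−s)^{α−1} E_{α,α}(−(t−s)^α) u(s)² ds with u₀ > 0 and u continuous on [0,T), then u(t) > 0 for all t ∈ [0,T). -/
/-!
The function `g(t) = t^(β-1) E_{α,β}(-t^α)` solves the Volterra equation
`g(t) + Γ(α)⁻¹ ∫₀ᵗ (t-s)^(α-1) g(s) ds = t^(β-1)/Γ(β)`: integrate the series termwise against the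
Beta integral. A solution `w` of `w(t) + c ∫₀ᵗ (t-s)^(α-1) w(s) ds = f(t)` with `t^(1-α) f(t)`
nondecreasing (for `g`: `β ≥ α`) that starts positive stays positive. At a first zero `t₁`, the
kernel comparison `(t-s)^(α-1) ≥ (t/t₁)^(α-1) (t₁-s)^(α-1)` bounds `w(t)` by a multiple of
`W(t) = ∫ₜ^{t₁} (t₁-s)^(α-1) w(s) ds`, and integrating this bound gives `W(t) ≤ C (t₁-t)^α W(t)`,
impossible for `t` close to `t₁`. Hence `E_α(-t^α) > 0` (`β = 1`) and `E_{α,α}(-t^α) > 0`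
(`β = α`), and the mild solution is `E_α(-t^α) u₀` plus a nonnegative integral.
-/

open Set intervalIntegral

noncomputable def mlE (α x : ℝ) : ℝ := ∑' j : ℕ, x ^ j / Real.Gamma (α * j + 1)

noncomputable def mlE2 (α x : ℝ) : ℝ := ∑' j : ℕ, x ^ j / Real.Gamma (α * j + α)

open Filter Topology MeasureTheory Real

noncomputable def mittagLeffler (α β x : ℝ) : ℝ := ∑' j : ℕ, x ^ j / Gamma (α * j + β)

theorem mlE_eq_mittagLeffler (α : ℝ) : mlE α = mittagLeffler α 1 := rfl

theorem mlE2_eq_mittagLeffler (α : ℝ) : mlE2 α = mittagLeffler α α := rfl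

theorem Gamma_mul_rpow_le_Gamma_add {a y : ℝ} (ha : 0 < a) (ha1 : a < 1) (hy : 1 - a < y) :
    Gamma y * (y + a - 1) ^ a ≤ Gamma (y + a) := by
  set s := y + a - 1
  have hs : 0 < s := by linarith
  have hconv := Gamma_mul_add_mul_le_rpow_Gamma_mul_rpow_Gamma hs (by linarith : 0 < s + 1) ha
    (sub_pos.2 ha1) (add_sub_cancel a 1)
  rw [show a * s + (1 - a) * (s + 1) = y by ring, Gamma_add_one hs.ne'] at hconv
  calc Gamma y * s ^ a ≤ Gamma s ^ a * (s * Gamma s) ^ (1 - a) * s ^ a := by gcongr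
    _ = s * Gamma s := by
      rw [mul_rpow hs.le (Gamma_pos_of_pos hs).le]
      have key : ∀ x : ℝ, 0 < x → x ^ (1 - a) * x ^ a = x := fun x hx => by
        rw [← rpow_add hx, sub_add_cancel, rpow_one]
      calc Gamma s ^ a * (s ^ (1 - a) * Gamma s ^ (1 - a)) * s ^ a
          = (s ^ (1 - a) * s ^ a) * (Gamma s ^ (1 - a) * Gamma s ^ a) := by ring
        _ = s * Gamma s := by rw [key s hs, key _ (Gamma_pos_of_pos hs)]
    _ = Gamma (y + a) := by rw [← Gamma_add_one hs.ne', sub_add_cancel]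

theorem summable_pow_div_Gamma {α : ℝ} (hα : 0 < α) (hα1 : α < 1) (β x : ℝ) :
    Summable (fun j : ℕ => x ^ j / Gamma (α * j + β)) := by
  refine summable_of_ratio_norm_eventually_le (r := 1 / 2) (by norm_num) ?_
  have harg : Tendsto (fun j : ℕ => α * j + β) atTop atTop :=
    tendsto_atTop_add_const_right _ β (tendsto_natCast_atTop_atTop.const_mul_atTop hα)
  have hpow : Tendsto (fun j : ℕ => (α * j + β + α - 1) ^ α) atTop atTop :=
    (tendsto_rpow_atTop hα).comp (tendsto_atTop_add_const_right _ (α - 1) harg |>.congr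
      fun j => by ring)
  filter_upwards [harg.eventually_ge_atTop 1, hpow.eventually_ge_atTop (2 * |x|)] with j hy hx
  set y := α * j + β
  have hΓ : 0 < Gamma y := Gamma_pos_of_pos (by linarith)
  have hΓα : 0 < Gamma (y + α) := Gamma_pos_of_pos (by linarith)
  have hgrowth : Gamma y * (2 * |x|) ≤ Gamma (y + α) :=
    (mul_le_mul_of_nonneg_left hx hΓ.le).trans (Gamma_mul_rpow_le_Gamma_add hα hα1 (by linarith))
  rw [show α * ((j + 1 : ℕ) : ℝ) + β = y + α by push_cast; ring]
  simp only [norm_div, norm_pow, Real.norm_eq_abs, abs_of_pos hΓ, abs_of_pos hΓα]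
  rw [div_le_iff₀ hΓα]
  calc |x| ^ (j + 1) = 1 / 2 * (|x| ^ j / Gamma y) * (Gamma y * (2 * |x|)) := by
        field_simp; ring
    _ ≤ 1 / 2 * (|x| ^ j / Gamma y) * Gamma (y + α) := by gcongr

theorem continuous_mittagLeffler {α : ℝ} (hα : 0 < α) (hα1 : α < 1) (β : ℝ) :
    Continuous (mittagLeffler α β) := by
  refine continuous_iff_continuousAt.2 fun x₀ => ?_
  set R := |x₀| + 1
  refine (continuousOn_tsum (fun j => (continuous_pow j).div_const _ |>.continuousOn)
    (summable_pow_div_Gamma hα hα1 β R).abs fun j x hx => ?_).continuousAt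
    (Metric.isOpen_ball.mem_nhds (by simp [R] : x₀ ∈ Metric.ball 0 R))
  rw [mem_ball_zero_iff, Real.norm_eq_abs] at hx
  simp only [norm_div, norm_pow, Real.norm_eq_abs, abs_div, abs_pow, abs_of_pos
    (by positivity : 0 < R)]
  gcongr

theorem intervalIntegrable_rpow_mul_sub_rpow {p q t : ℝ} (hp : 0 < p) (hq : 0 < q) (ht : 0 < t) :
    IntervalIntegrable (fun s => s ^ (p - 1) * (t - s) ^ (q - 1)) volume 0 t := by
  have hleft : IntervalIntegrable (fun s => s ^ (p - 1) * (t - s) ^ (q - 1)) volume 0 (t / 2) := by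
    refine (intervalIntegrable_rpow' (by linarith)).mul_continuousOn
      (ContinuousOn.rpow_const (by fun_prop) fun s hs => Or.inl ?_)
    rw [uIcc_of_le (by linarith)] at hs
    linarith [hs.2]
  have hright : IntervalIntegrable (fun s => s ^ (p - 1) * (t - s) ^ (q - 1)) volume (t / 2) t := by
    refine IntervalIntegrable.continuousOn_mul ?_
      (ContinuousOn.rpow_const (by fun_prop) fun s hs => Or.inl ?_)
    · simpa using (intervalIntegrable_rpow' (r := q - 1) (by linarith)
        (a := t - t / 2) (b := t - t)).comp_sub_left t
    · rw [uIcc_of_le (by linarith)] at hs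
      exact (lt_of_lt_of_le (by linarith) hs.1).ne'
  exact hleft.trans hright

theorem integral_rpow_mul_sub_rpow {p q t : ℝ} (hp : 0 < p) (hq : 0 < q) (ht : 0 < t) :
    ∫ s in 0..t, s ^ (p - 1) * (t - s) ^ (q - 1)
      = Gamma p * Gamma q / Gamma (p + q) * t ^ (p + q - 1) := by
  have hC := Complex.betaIntegral_scaled p q ht
  rw [Complex.betaIntegral_eq_Gamma_mul_div _ _ (by simpa) (by simpa)] at hC
  have hlhs : ∫ s in 0..t, (s : ℂ) ^ ((p : ℂ) - 1) * ((t : ℂ) - s) ^ ((q : ℂ) - 1)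
      = ((∫ s in 0..t, s ^ (p - 1) * (t - s) ^ (q - 1) : ℝ) : ℂ) := by
    rw [← intervalIntegral.integral_ofReal]
    refine intervalIntegral.integral_congr fun s hs => ?_
    rw [uIcc_of_le ht.le] at hs
    push_cast
    rw [Complex.ofReal_cpow hs.1, Complex.ofReal_cpow (sub_nonneg.2 hs.2)]
    push_cast
    ring_nf
  rw [hlhs, ← Complex.ofReal_add] at hC
  simp only [Complex.Gamma_ofReal] at hC
  rw [← Complex.ofReal_one, ← Complex.ofReal_sub, ← Complex.ofReal_cpow ht.le, mul_comm] at hC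
  exact_mod_cast hC

theorem rpow_mul_neg_rpow_pow {α β s : ℝ} (hs : 0 < s) (j : ℕ) :
    s ^ (β - 1) * (-(s ^ α)) ^ j = (-1) ^ j * s ^ (α * j + β - 1) := by
  rw [neg_pow, ← rpow_natCast (s ^ α), ← rpow_mul hs.le, mul_left_comm, ← rpow_add hs]
  ring_nf

theorem hasSum_mittagLeffler_tail {α : ℝ} (hα : 0 < α) (hα1 : α < 1) (β x : ℝ) :
    HasSum (fun j : ℕ => x ^ (j + 1) / Gamma (α * (j + 1 : ℕ) + β))
      (mittagLeffler α β x - 1 / Gamma β) := by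
  have h := (hasSum_nat_add_iff' 1).2 (summable_pow_div_Gamma hα hα1 β x).hasSum
  simpa [mittagLeffler] using h

theorem hasSum_integral_kernel_mul_rpow_mittagLeffler {α β t : ℝ} (hα : 0 < α) (hα1 : α < 1)
    (hβ : 0 < β) (ht : 0 < t) :
    HasSum (fun j : ℕ => -(Gamma α * t ^ (β - 1)) *
        ((-(t ^ α)) ^ (j + 1) / Gamma (α * (j + 1 : ℕ) + β)))
      (∫ s in 0..t, (t - s) ^ (α - 1) * (s ^ (β - 1) * mittagLeffler α β (-(s ^ α)))) := by
  set G : ℕ → ℝ → ℝ := fun j s => s ^ (α * j + β - 1) * (t - s) ^ (α - 1) / Gamma (α * j + β)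
  have hp : ∀ j : ℕ, 0 < α * j + β := fun j => by positivity
  have hGint : ∀ j, IntegrableOn (G j) (Ioc 0 t) := fun j =>
    ((intervalIntegrable_iff_integrableOn_Ioc_of_le ht.le).1
      (intervalIntegrable_rpow_mul_sub_rpow (hp j) hα ht)).div_const _
  have hGnonneg : ∀ j, ∀ s ∈ Ioc 0 t, 0 ≤ G j s := fun j s hs =>
    div_nonneg (mul_nonneg (rpow_nonneg hs.1.le _) (rpow_nonneg (sub_nonneg.2 hs.2) _))
      (Gamma_pos_of_pos (hp j)).le
  have hG : ∀ j : ℕ, ∫ s in Ioc 0 t, G j s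
      = Gamma α * t ^ (β - 1) * ((t ^ α) ^ (j + 1) / Gamma (α * (j + 1 : ℕ) + β)) := fun j => by
    have hΓ := (Gamma_pos_of_pos (hp j)).ne'
    have hpow : t ^ (β - 1) * (t ^ α) ^ (j + 1) = t ^ (α * j + β + α - 1) := by
      rw [← rpow_natCast, ← rpow_mul ht.le, ← rpow_add ht]
      push_cast
      ring_nf
    rw [← integral_of_le ht.le, intervalIntegral.integral_div,
      integral_rpow_mul_sub_rpow (hp j) hα ht, mul_div_assoc', mul_assoc, hpow,
      show α * ((j + 1 : ℕ) : ℝ) + β = α * j + β + α by push_cast; ring]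
    field_simp
  have hseries : ∀ s ∈ Ioc 0 t, (t - s) ^ (α - 1) * (s ^ (β - 1) * mittagLeffler α β (-(s ^ α)))
      = ∑' j, (-1) ^ j * G j s := fun s hs => by
    rw [mittagLeffler, ← tsum_mul_left, ← tsum_mul_left]
    refine tsum_congr fun j => ?_
    rw [← mul_div_assoc, rpow_mul_neg_rpow_pow hs.1]
    ring
  have hnorm : ∀ j, ∫ s in Ioc 0 t, ‖(-1) ^ j * G j s‖ = ∫ s in Ioc 0 t, G j s := fun j =>
    setIntegral_congr_fun measurableSet_Ioc fun s hs => by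
      rw [norm_mul, norm_pow, norm_neg, norm_one, one_pow, one_mul,
        Real.norm_of_nonneg (hGnonneg j s hs)]
  have hsum := hasSum_integral_of_summable_integral_norm (fun j => (hGint j).const_mul ((-1) ^ j))
    (by
      simp only [hnorm, hG]
      exact ((summable_nat_add_iff 1).2 (summable_pow_div_Gamma hα hα1 β (t ^ α))).mul_left _)
  simp only [MeasureTheory.integral_const_mul, hG] at hsum
  rw [integral_of_le ht.le, setIntegral_congr_fun measurableSet_Ioc hseries]
  refine hsum.congr_fun fun j => ?_
  rw [neg_pow (t ^ α), pow_succ (-1 : ℝ)]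
  ring

theorem rpow_mul_mittagLeffler_add_integral_eq {α β t : ℝ} (hα : 0 < α) (hα1 : α < 1)
    (hβ : 0 < β) (ht : 0 < t) :
    t ^ (β - 1) * mittagLeffler α β (-(t ^ α))
      + (Gamma α)⁻¹ * ∫ s in 0..t, (t - s) ^ (α - 1) * (s ^ (β - 1) * mittagLeffler α β (-(s ^ α)))
      = t ^ (β - 1) / Gamma β := by
  rw [(hasSum_integral_kernel_mul_rpow_mittagLeffler hα hα1 hβ ht).unique
    ((hasSum_mittagLeffler_tail hα hα1 β (-(t ^ α))).mul_left _)]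
  field_simp [(Gamma_pos_of_pos hα).ne']
  ring

theorem rpow_mul_rpow_sub_le_rpow_sub_mul_rpow {α s t τ : ℝ} (hα : α ≤ 1) (hs : 0 ≤ s)
    (hst : s < t) (htτ : t ≤ τ) :
    t ^ (α - 1) * (τ - s) ^ (α - 1) ≤ (t - s) ^ (α - 1) * τ ^ (α - 1) := by
  rw [← mul_rpow (by linarith) (by linarith), ← mul_rpow (by linarith) (by linarith)]
  exact rpow_le_rpow_of_nonpos (by nlinarith) (by nlinarith [mul_nonneg hs (sub_nonneg.2 htτ)])
    (by linarith)

theorem integral_sub_rpow_sub_one {α : ℝ} (hα : 0 < α) (τ a b : ℝ) :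
    ∫ s in a..b, (τ - s) ^ (α - 1) = ((τ - a) ^ α - (τ - b) ^ α) / α := by
  rw [intervalIntegral.integral_comp_sub_left (fun x => x ^ (α - 1)),
    integral_rpow (Or.inl (by linarith)), sub_add_cancel]

theorem intervalIntegrable_sub_rpow_sub_one {α : ℝ} (hα : 0 < α) (τ a b : ℝ) :
    IntervalIntegrable (fun s => (τ - s) ^ (α - 1)) volume a b := by
  simpa using (intervalIntegrable_rpow' (a := τ - a) (b := τ - b)
    (by linarith : -1 < α - 1)).comp_sub_left τ

theorem MeasureTheory.IntegrableOn.intervalIntegrable_of_Ioc_subset {g : ℝ → ℝ} {l τ a b : ℝ}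
    (hg : IntegrableOn g (Ioc l τ)) (ha : l ≤ a) (hab : a ≤ b) (hb : b ≤ τ) :
    IntervalIntegrable g volume a b :=
  (intervalIntegrable_iff_integrableOn_Ioc_of_le hab).2 (hg.mono_set (Ioc_subset_Ioc ha hb))

theorem exists_first_nonpos {w : ℝ → ℝ} (hw : ContinuousOn w (Ioi 0))
    (hw0 : ∀ᶠ t in 𝓝[>] 0, 0 < w t) {b : ℝ} (hb : 0 < b) (hwb : w b ≤ 0) :
    ∃ t₁, 0 < t₁ ∧ w t₁ ≤ 0 ∧ ∀ s ∈ Ioo 0 t₁, 0 < w s := by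
  obtain ⟨δ, hδ, hδw⟩ := mem_nhdsGT_iff_exists_Ioo_subset.1 hw0
  have hδb : δ ≤ b := le_of_not_gt fun h => hwb.not_gt (hδw ⟨hb, h⟩)
  have hS : IsCompact (Icc δ b ∩ w ⁻¹' Iic 0) := isCompact_Icc.of_isClosed_subset
    ((hw.mono fun x hx => lt_of_lt_of_le hδ hx.1).preimage_isClosed_of_isClosed isClosed_Icc
      isClosed_Iic) inter_subset_left
  obtain ⟨t₁, ⟨⟨hδt₁, ht₁b⟩, hwt₁⟩, hleast⟩ := hS.exists_isLeast ⟨b, ⟨hδb, le_rfl⟩, hwb⟩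
  refine ⟨t₁, lt_of_lt_of_le hδ hδt₁, hwt₁, fun s hs => ?_⟩
  by_contra! hws
  rcases lt_or_ge s δ with hsδ | hδs
  · exact hws.not_gt (hδw ⟨hs.1, hsδ⟩)
  · exact hs.2.not_ge (hleast ⟨⟨hδs, hs.2.le.trans ht₁b⟩, hws⟩)

theorem exists_mul_tail_integral_lt {α K t₁ : ℝ} {w : ℝ → ℝ} (hα : 0 < α) (hα1 : α ≤ 1)
    (hK : 0 ≤ K) (ht₁ : 0 < t₁) (hint : IntegrableOn (fun s => (t₁ - s) ^ (α - 1) * w s) (Ioc 0 t₁))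
    (hpos : ∀ s ∈ Ioo 0 t₁, 0 < w s) :
    ∃ t ∈ Ioo 0 t₁, K * t ^ (α - 1) * ∫ s in t..t₁, (t₁ - s) ^ (α - 1) * w s < w t := by
  by_contra! hbound
  set W : ℝ → ℝ := fun t => ∫ s in t..t₁, (t₁ - s) ^ (α - 1) * w s
  have hkernel_pos : ∀ t ∈ Ioo 0 t₁, ∀ s ∈ Ioo t t₁, 0 < (t₁ - s) ^ (α - 1) * w s :=
    fun t ht s hs => mul_pos (rpow_pos_of_pos (sub_pos.2 hs.2) _) (hpos s ⟨ht.1.trans hs.1, hs.2⟩)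
  have hWpos : ∀ t ∈ Ioo 0 t₁, 0 < W t := fun t ht =>
    intervalIntegral_pos_of_pos_on (hint.intervalIntegrable_of_Ioc_subset ht.1.le ht.2.le le_rfl)
      (hkernel_pos t ht) ht.2
  have hWanti : ∀ t ∈ Ioo 0 t₁, ∀ s ∈ Icc t t₁, W s ≤ W t := fun t ht s hs => by
    refine integral_mono_interval hs.1 hs.2 le_rfl ?_
      (hint.intervalIntegrable_of_Ioc_subset ht.1.le ht.2.le le_rfl)
    rw [← Measure.restrict_congr_set Ioo_ae_eq_Ioc]
    exact (ae_restrict_iff' measurableSet_Ioo).2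
      (ae_of_all _ fun r hr => (hkernel_pos t ht r hr).le)
  set C := K * (t₁ / 2) ^ (α - 1)
  have hsmall : ∀ᶠ t in 𝓝[<] t₁, C * ((t₁ - t) ^ α / α) < 1 := by
    have hcont : Continuous fun t : ℝ => C * ((t₁ - t) ^ α / α) :=
      continuous_const.mul (((continuous_const.sub continuous_id).rpow_const
        fun _ => Or.inr hα.le).div_const _)
    have hlim := hcont.tendsto t₁
    simp only [sub_self, zero_rpow hα.ne', zero_div, mul_zero] at hlim
    exact (hlim.mono_left nhdsWithin_le_nhds).eventually (gt_mem_nhds one_pos)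
  obtain ⟨t, hCt, ht_half, htt₁⟩ := (hsmall.and (Ioo_mem_nhdsLT (half_lt_self ht₁))).exists
  have ht : t ∈ Ioo 0 t₁ := ⟨by linarith, htt₁⟩
  have hw_le : ∀ s ∈ Ioo t t₁, w s ≤ C * W t := fun s hs => by
    have hs0 : s ∈ Ioo 0 t₁ := ⟨ht.1.trans hs.1, hs.2⟩
    calc w s ≤ K * s ^ (α - 1) * W s := hbound s hs0
      _ ≤ C * W t := by
        refine mul_le_mul (mul_le_mul_of_nonneg_left ?_ hK) (hWanti t ht s ⟨hs.1.le, hs.2.le⟩)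
          (hWpos s hs0).le (by positivity)
        exact rpow_le_rpow_of_nonpos (half_pos ht₁) (by linarith [hs.1]) (by linarith)
  have hWt : W t ≤ C * W t * ((t₁ - t) ^ α / α) :=
    calc W t ≤ ∫ s in t..t₁, (t₁ - s) ^ (α - 1) * (C * W t) :=
          integral_mono_on_of_le_Ioo htt₁.le
            (hint.intervalIntegrable_of_Ioc_subset ht.1.le htt₁.le le_rfl)
            ((intervalIntegrable_sub_rpow_sub_one hα t₁ t t₁).mul_const _) fun s hs =>
            mul_le_mul_of_nonneg_left (hw_le s hs) (rpow_nonneg (by linarith [hs.2]) _)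
      _ = C * W t * ((t₁ - t) ^ α / α) := by
        rw [intervalIntegral.integral_mul_const, integral_sub_rpow_sub_one hα, sub_self,
          zero_rpow hα.ne', sub_zero]
        ring
  linarith [mul_pos (hWpos t ht) (sub_pos.2 hCt)]

section VolterraPositivity

variable {α c : ℝ} {w f : ℝ → ℝ}

theorem le_mul_tail_integral_of_add_mul_integral_eq (hα1 : α ≤ 1) (hc : 0 ≤ c)
    (hint : ∀ τ > 0, IntegrableOn (fun s => (τ - s) ^ (α - 1) * w s) (Ioc 0 τ))
    (hf : MonotoneOn (fun t => t ^ (1 - α) * f t) (Ioi 0))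
    (heq : ∀ t > 0, w t + c * ∫ s in 0..t, (t - s) ^ (α - 1) * w s = f t)
    {t₁ : ℝ} (ht₁ : 0 < t₁) (hwt₁ : w t₁ ≤ 0) (hpos : ∀ s ∈ Ioo 0 t₁, 0 < w s)
    {t : ℝ} (ht : t ∈ Ioo 0 t₁) :
    w t ≤ c / t₁ ^ (α - 1) * t ^ (α - 1) * ∫ s in t..t₁, (t₁ - s) ^ (α - 1) * w s := by
  obtain ⟨ht0, htt₁⟩ := ht
  have hr : 0 ≤ t ^ (α - 1) / t₁ ^ (α - 1) := by positivity
  have hsplit := integral_add_adjacent_intervals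
    ((hint t₁ ht₁).intervalIntegrable_of_Ioc_subset le_rfl ht0.le htt₁.le)
    ((hint t₁ ht₁).intervalIntegrable_of_Ioc_subset ht0.le htt₁.le le_rfl)
  have hcompare : t ^ (α - 1) / t₁ ^ (α - 1) * ∫ s in 0..t, (t₁ - s) ^ (α - 1) * w s
      ≤ ∫ s in 0..t, (t - s) ^ (α - 1) * w s := by
    rw [← intervalIntegral.integral_const_mul]
    refine integral_mono_on_of_le_Ioo ht0.le
      (((hint t₁ ht₁).intervalIntegrable_of_Ioc_subset le_rfl ht0.le htt₁.le).const_mul _)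
      ((hint t ht0).intervalIntegrable_of_Ioc_subset le_rfl ht0.le le_rfl) fun s hs => ?_
    rw [← mul_assoc]
    refine mul_le_mul_of_nonneg_right ?_ (hpos s ⟨hs.1, hs.2.trans htt₁⟩).le
    rw [div_mul_eq_mul_div, div_le_iff₀ (rpow_pos_of_pos ht₁ _)]
    exact rpow_mul_rpow_sub_le_rpow_sub_mul_rpow hα1 hs.1.le hs.2 htt₁.le
  have hft : f t ≤ t ^ (α - 1) / t₁ ^ (α - 1) * f t₁ := by
    have hinv : ∀ x : ℝ, 0 < x → x ^ (α - 1) * x ^ (1 - α) = 1 := fun x hx => by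
      rw [← rpow_add hx, show α - 1 + (1 - α) = 0 by ring, rpow_zero]
    calc f t = t ^ (α - 1) * (t ^ (1 - α) * f t) := by rw [← mul_assoc, hinv t ht0, one_mul]
      _ ≤ t ^ (α - 1) * (t₁ ^ (1 - α) * f t₁) :=
        mul_le_mul_of_nonneg_left (hf ht0 ht₁ htt₁.le) (rpow_nonneg ht0.le _)
      _ = t ^ (α - 1) / t₁ ^ (α - 1) * f t₁ := by
        rw [show 1 - α = -(α - 1) by ring, rpow_neg ht₁.le]
        ring
  have hft₁ : f t₁ ≤ c * ∫ s in 0..t₁, (t₁ - s) ^ (α - 1) * w s := by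
    linarith [heq t₁ ht₁]
  rw [← hsplit] at hft₁
  rw [show c / t₁ ^ (α - 1) * t ^ (α - 1) = c * (t ^ (α - 1) / t₁ ^ (α - 1)) by ring]
  linarith [heq t ht0, mul_le_mul_of_nonneg_left hcompare hc, mul_le_mul_of_nonneg_left hft₁ hr]

theorem pos_of_add_mul_integral_eq (hα : 0 < α) (hα1 : α ≤ 1) (hc : 0 ≤ c)
    (hw : ContinuousOn w (Ioi 0))
    (hint : ∀ τ > 0, IntegrableOn (fun s => (τ - s) ^ (α - 1) * w s) (Ioc 0 τ))
    (hw0 : ∀ᶠ t in 𝓝[>] 0, 0 < w t)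
    (hf : MonotoneOn (fun t => t ^ (1 - α) * f t) (Ioi 0))
    (heq : ∀ t > 0, w t + c * ∫ s in 0..t, (t - s) ^ (α - 1) * w s = f t) :
    ∀ t > 0, 0 < w t := by
  by_contra! ⟨b, hb, hwb⟩
  obtain ⟨t₁, ht₁, hwt₁, hpos⟩ := exists_first_nonpos hw hw0 hb hwb
  obtain ⟨t, ht, hlt⟩ := exists_mul_tail_integral_lt hα hα1
    (div_nonneg hc (rpow_nonneg ht₁.le _)) ht₁ (hint t₁ ht₁) hpos
  exact hlt.not_ge (le_mul_tail_integral_of_add_mul_integral_eq hα1 hc hint hf heq ht₁ hwt₁ hpos ht)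

end VolterraPositivity

theorem mittagLeffler_zero (α β : ℝ) : mittagLeffler α β 0 = 1 / Gamma β := by
  rw [mittagLeffler, tsum_eq_single 0 fun j hj => by simp [zero_pow hj]]
  simp

theorem mittagLeffler_neg_rpow_pos {α β : ℝ} (hα : 0 < α) (hα1 : α < 1) (hαβ : α ≤ β) {t : ℝ}
    (ht : 0 ≤ t) : 0 < mittagLeffler α β (-(t ^ α)) := by
  have hβ : 0 < β := hα.trans_le hαβ
  have hΓβ : 0 < 1 / Gamma β := one_div_pos.2 (Gamma_pos_of_pos hβ)
  set E : ℝ → ℝ := fun t => mittagLeffler α β (-(t ^ α))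
  have hE : Continuous E :=
    (continuous_mittagLeffler hα hα1 β).comp (continuous_rpow_const hα.le).neg
  have hE0 : E 0 = 1 / Gamma β := by simp [E, zero_rpow hα.ne', mittagLeffler_zero]
  rcases ht.eq_or_lt with rfl | ht
  · change 0 < E 0
    rw [hE0]
    exact hΓβ
  have hint : ∀ τ > 0, IntegrableOn (fun s => (τ - s) ^ (α - 1) * (s ^ (β - 1) * E s)) (Ioc 0 τ) :=
    fun τ hτ => ((intervalIntegrable_iff_integrableOn_Ioc_of_le hτ.le).1
      ((intervalIntegrable_rpow_mul_sub_rpow hβ hα hτ).mul_continuousOn hE.continuousOn)).congr_fun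
      (fun s _ => by ring) measurableSet_Ioc
  have hnear0 : ∀ᶠ t in 𝓝[>] 0, 0 < t ^ (β - 1) * E t := by
    have hlim : Tendsto E (𝓝[>] 0) (𝓝 (1 / Gamma β)) :=
      hE0 ▸ (hE.tendsto 0).mono_left nhdsWithin_le_nhds
    filter_upwards [hlim.eventually (lt_mem_nhds hΓβ), self_mem_nhdsWithin] with t hEt ht
    exact mul_pos (rpow_pos_of_pos ht _) hEt
  have hmono : MonotoneOn (fun t => t ^ (1 - α) * (t ^ (β - 1) / Gamma β)) (Ioi 0) := by
    refine MonotoneOn.congr (f₁ := fun t => t ^ (β - α) / Gamma β)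
      (fun a ha b _ hab => div_le_div_of_nonneg_right (rpow_le_rpow (le_of_lt ha) hab
        (sub_nonneg.2 hαβ)) (Gamma_pos_of_pos hβ).le) fun t ht => ?_
    rw [mul_div_assoc', ← rpow_add ht, show 1 - α + (β - 1) = β - α by ring]
  have hg := pos_of_add_mul_integral_eq hα hα1.le (inv_nonneg.2 (Gamma_pos_of_pos hα).le)
    ((continuousOn_id.rpow_const fun x hx => Or.inl (ne_of_gt hx)).mul hE.continuousOn)
    hint hnear0 hmono (fun t ht => rpow_mul_mittagLeffler_add_integral_eq hα hα1 hβ ht) t ht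
  exact pos_of_mul_pos_right hg (rpow_nonneg ht.le _)

theorem mild_solution_positive_general (α u₀ T : ℝ) (hα : 0 < α) (hα1 : α < 1) (hu₀ : 0 < u₀)
    (u : ℝ → ℝ)
    (heq : ∀ t ∈ Set.Ico (0:ℝ) T, u t = mlE α (-(t ^ α)) * u₀
      + ∫ s in (0:ℝ)..t, (t - s) ^ (α - 1) * mlE2 α (-((t - s) ^ α)) * (u s) ^ 2) :
    ∀ t ∈ Set.Ico (0:ℝ) T, 0 < u t := by
  intro t ht
  rw [heq t ht, mlE_eq_mittagLeffler, mlE2_eq_mittagLeffler]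
  have hE := mittagLeffler_neg_rpow_pos hα hα1 hα1.le ht.1
  have hI : 0 ≤ ∫ s in (0:ℝ)..t, (t - s) ^ (α - 1) * mittagLeffler α α (-((t - s) ^ α)) * u s ^ 2 :=
    integral_nonneg ht.1 fun s hs => by
      have hts : 0 ≤ t - s := sub_nonneg.2 hs.2
      have hK := mittagLeffler_neg_rpow_pos hα hα1 le_rfl hts
      exact mul_nonneg (mul_nonneg (rpow_nonneg hts _) hK.le) (sq_nonneg _)
  exact add_pos_of_pos_of_nonneg (mul_pos hE hu₀) hI

/-- Positivity of the mild solution of `ᶜD₀₊^α u = −u(1−u)` with `u₀ > 0`. -/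
theorem mild_solution_positive (α u₀ T : ℝ) (hα : 0 < α) (hα1 : α < 1) (hu₀ : 0 < u₀)
    (u : ℝ → ℝ) (hu : ContinuousOn u (Set.Ico 0 T))
    (heq : ∀ t ∈ Set.Ico (0:ℝ) T, u t = mlE α (-(t ^ α)) * u₀
      + ∫ s in (0:ℝ)..t, (t - s) ^ (α - 1) * mlE2 α (-((t - s) ^ α)) * (u s) ^ 2) :
    ∀ t ∈ Set.Ico (0:ℝ) T, 0 < u t :=
  mild_solution_positive_general α u₀ T hα hα1 hu₀ u heq
end
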